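/- Every finite-dimensional representation of the equioriented A_m quiver (vertices 1,…,m with arrows i → i+1) over a field decomposes as a direct sum of indecomposable representations whose dimension vectors are interval vectors (0,…,0,1,…,1,0,…,0), and in each such indecomposable all maps between adjacent nonzero vertices are isomorphisms (identities after choosing bases). -/

import Mathlib

/-!
Induct on the number of vertices, keeping a basis of *chains*: vectors `v j` supported on an
interval `[a j, b j]`, with `f i (v j i) = v j (i + 1)` inside it, such that at every vertex the
chains through it form a basis. To add a new last vertex, look at the images of the chains in the
new space, ordered by the starting vertex of the chain, and keep the pivots (images outside the
span of the earlier ones). A non-pivot chain is corrected by subtracting the combination of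
earlier-starting pivot chains with the same image; those start no later, so the difference is
again a chain on the same interval, now ending at the old last vertex. The pivot chains are
prolonged, and a basis of a complement of the span of their images supplies new one-vertex
chains. The lines spanned by the chain vectors are then the interval summands.
-/

open Submodule Set Module Finsupp
open scoped Finset

theorem Finsupp.linearCombination_congr_of_mem_supported {R M α : Type*} [Semiring R]
    [AddCommMonoid M] [Module R M] {s : Set α} {v w : α → M} (h : EqOn v w s) {l : α →₀ R}
    (hl : l ∈ supported R R s) : linearCombination R v l = linearCombination R w l := by
  simp only [linearCombination_apply]
  exact Finsupp.sum_congr fun x hx => by rw [h (hl hx)]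

section
variable (K : Type*) {U ι : Type*} [Field K] [AddCommGroup U] [Module K U]

def pivots [LinearOrder ι] (u : ι → U) : Set ι := {j | u j ∉ span K (u '' Iio j)}

variable {K}

theorem mem_span_pivots_inter_Iic [LinearOrder ι] [WellFoundedLT ι] (u : ι → U) (j : ι) :
    u j ∈ span K (u '' (pivots K u ∩ Iic j)) := by
  induction j using WellFoundedLT.induction with
  | _ j ih =>
  by_cases hj : j ∈ pivots K u
  · exact subset_span ⟨j, ⟨hj, le_rfl⟩, rfl⟩
  · have hle : span K (u '' Iio j) ≤ span K (u '' (pivots K u ∩ Iic j)) := by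
      rw [span_le]
      rintro _ ⟨k, hk, rfl⟩
      exact span_mono (image_mono (inter_subset_inter_right _ (Iic_subset_Iic.2 hk.le))) (ih k hk)
    exact hle (not_not.1 hj)

theorem linearIndepOn_pivots [LinearOrder ι] [Finite ι] (u : ι → U) :
    LinearIndepOn K u (pivots K u) := by
  classical
  have := Fintype.ofFinite ι
  suffices ∀ s : Finset ι, ↑s ⊆ pivots K u → LinearIndepOn K u s by
    simpa using this (pivots K u).toFinset (by simp)
  intro s
  induction s using Finset.induction_on_max with
  | empty => simp
  | insert j s hlt ih =>
    intro hs
    rw [Finset.coe_insert] at hs ⊢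
    refine (ih ((subset_insert _ _).trans hs)).insert fun hj => hs (mem_insert j _) ?_
    exact span_mono (image_mono fun k hk => hlt k hk) hj

theorem exists_linearIndepOn_forall_mem_span_le [Fintype ι] {α : Type*} [LinearOrder α]
    (r : ι → α) (u : ι → U) : ∃ T : Finset ι, LinearIndepOn K u T ∧
      ∀ j ∉ T, u j ∈ span K (u '' {j' | j' ∈ T ∧ r j' ≤ r j}) := by
  classical
  let key : ι → Lex (α × Fin (Fintype.card ι)) := fun j => toLex (r j, Fintype.equivFin ι j)
  have hkey : Function.Injective key := fun j j' h => (Fintype.equivFin ι).injective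
    (congrArg (fun x => (ofLex x).2) h)
  let : LinearOrder ι := LinearOrder.lift' key hkey
  refine ⟨(pivots K u).toFinset, by simpa using linearIndepOn_pivots u, fun j hj => ?_⟩
  have hsub : pivots K u ∩ Iic j ⊆ {j' | j' ∈ (pivots K u).toFinset ∧ r j' ≤ r j} :=
    fun k ⟨hk, hkj⟩ => ⟨by simpa using hk, Prod.Lex.monotone_fst_ofLex hkj⟩
  exact span_mono (image_mono hsub) (mem_span_pivots_inter_Iic u j)

theorem exists_linearIndepOn_sub_linearCombination_eq_ite [Fintype ι] [DecidableEq ι]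
    {α : Type*} [LinearOrder α] (r : ι → α) (u : ι → U) :
    ∃ (T : Finset ι) (E : ι → ι →₀ K), LinearIndepOn K u T ∧
      (∀ j, E j ∈ supported K K {j' | j' ∈ T ∧ r j' ≤ r j}) ∧
      ∀ j, u j - linearCombination K u (E j) = if j ∈ T then u j else 0 := by
  obtain ⟨T, hT, hspan⟩ := exists_linearIndepOn_forall_mem_span_le (K := K) r u
  have hcoeff (j : ι) : ∃ c ∈ supported K K {j' | j' ∈ T ∧ r j' ≤ r j},
      u j - linearCombination K u c = if j ∈ T then u j else 0 := by
    by_cases hj : j ∈ T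
    · exact ⟨0, zero_mem _, by simp [hj]⟩
    · obtain ⟨c, hc, hcu⟩ := (mem_span_image_iff_linearCombination K).1 (hspan j hj)
      exact ⟨c, hc, by simp [hj, hcu]⟩
  choose E hE_supp hE_eq using hcoeff
  exact ⟨T, E, hT, hE_supp, hE_eq⟩

theorem LinearIndepOn.exists_span_union_eq_top [FiniteDimensional K U] {u : ι → U}
    {T : Finset ι} (hT : LinearIndepOn K u T) :
    ∃ (p : ℕ) (w : Fin p → U),
      span K (u '' T ∪ range w) = ⊤ ∧ #T + p = finrank K U := by
  obtain ⟨q, hq⟩ := (span K (u '' T)).exists_isCompl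
  have hq_span : span K (range (q.subtype ∘ finBasis K q)) = q := by
    rw [range_comp, span_image, (finBasis K q).span_eq, map_subtype_top]
  refine ⟨_, q.subtype ∘ finBasis K q, by rw [span_union, hq_span, hq.sup_eq_top], ?_⟩
  rw [← finrank_add_eq_of_isCompl hq, image_eq_range, finrank_span_eq_card hT]
  simp

end

section IntervalBasis
variable {K : Type*} [Field K] {m : ℕ} {V : Fin (m + 1) → Type*} [∀ i, AddCommGroup (V i)]
  [∀ i, Module K (V i)] (f : ∀ i : Fin m, V i.castSucc →ₗ[K] V i.succ) {ι κ : Type*}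

structure IsIntervalChain (a b : Fin (m + 1)) (x : ∀ i, V i) : Prop where
  le : a ≤ b
  eq_zero : ∀ i, i ∉ Icc a b → x i = 0
  map_eq : ∀ i : Fin m, a ≤ i.castSucc → f i (x i.castSucc) = x i.succ

/-- Linear independence at each vertex is encoded by counting the chains through it, which
`sub_linearCombination` then preserves for free. -/
structure IsIntervalBasis [Fintype ι] (a b : ι → Fin (m + 1)) (v : ι → ∀ i, V i) :
    Prop where
  isIntervalChain : ∀ j, IsIntervalChain f (a j) (b j) (v j)
  span_eq_top : ∀ i, span K (range fun j => v j i) = ⊤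
  card_eq : ∀ i, #{j | i ∈ Icc (a j) (b j)} = finrank K (V i)

variable {f}

namespace IsIntervalChain
variable {a b : Fin (m + 1)} {x : ∀ i, V i}

theorem mem_Icc_of_ne_zero (hx : IsIntervalChain f a b x) {i : Fin (m + 1)} (h : x i ≠ 0) :
    i ∈ Icc a b :=
  by_contra fun hi => h (hx.eq_zero i hi)

theorem sub_linearCombination (hx : IsIntervalChain f a b x) {a' b' : ι → Fin (m + 1)}
    {y : ι → ∀ i, V i} (hy : ∀ j, IsIntervalChain f (a' j) (b' j) (y j)) {c : ι →₀ K}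
    (hc : c ∈ supported K K {j | a' j ≤ a ∧ b' j ≤ b}) :
    IsIntervalChain f a b fun i =>
      if a ≤ i then x i - linearCombination K (fun j => y j i) c else 0 := by
  refine ⟨hx.le, fun i hi => ?_, fun i hi => ?_⟩
  · by_cases hai : a ≤ i
    · have hbi : b < i := lt_of_not_ge fun h => hi ⟨hai, h⟩
      have hvanish : EqOn (fun j => y j i) 0 {j | a' j ≤ a ∧ b' j ≤ b} := fun j hj =>
        (hy j).eq_zero i fun h => (hj.2.trans_lt hbi).not_ge h.2
      simp [hai, hx.eq_zero i hi, linearCombination_congr_of_mem_supported hvanish hc]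
    · simp [hai]
  · have hmap : EqOn (f i ∘ fun j => y j i.castSucc) (fun j => y j i.succ)
        {j | a' j ≤ a ∧ b' j ≤ b} := fun j hj => (hy j).map_eq i (hj.1.trans hi)
    simp only [if_pos hi, if_pos (hi.trans (Fin.castSucc_le_succ i)), map_sub, hx.map_eq i hi,
      apply_linearCombination, linearCombination_congr_of_mem_supported hmap hc]

end IsIntervalChain

variable [Fintype ι] [Fintype κ]

namespace IsIntervalBasis
variable {a b : ι → Fin (m + 1)} {v : ι → ∀ i, V i}

theorem linearIndepOn (hv : IsIntervalBasis f a b v) (i : Fin (m + 1)) :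
    LinearIndepOn K (fun j => v j i) {j | i ∈ Icc (a j) (b j)} := by
  classical
  refine linearIndependent_of_top_le_span_of_card_eq_finrank ?_ ?_
  · rw [← hv.span_eq_top i, span_le]
    rintro _ ⟨j, rfl⟩
    by_cases hj : i ∈ Icc (a j) (b j)
    · exact subset_span ⟨⟨j, hj⟩, rfl⟩
    · simp only [(hv.isIntervalChain j).eq_zero i hj, SetLike.mem_coe, zero_mem]
  · rw [Fintype.card_subtype, ← hv.card_eq i]
    rfl

theorem ne_zero (hv : IsIntervalBasis f a b v) {j : ι} {i : Fin (m + 1)}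
    (hi : i ∈ Icc (a j) (b j)) : v j i ≠ 0 :=
  (hv.linearIndepOn i).ne_zero hi

theorem isInternal [DecidableEq ι] (hv : IsIntervalBasis f a b v) (i : Fin (m + 1)) :
    DirectSum.IsInternal fun j => K ∙ v j i := by
  rw [DirectSum.isInternal_submodule_iff_iSupIndep_and_iSup_eq_top, ← span_range_eq_iSup,
    hv.span_eq_top i, ← iSupIndep_ne_bot]
  refine ⟨?_, rfl⟩
  have : LinearIndepOn K (fun j => v j i) {j | (K ∙ v j i) ≠ ⊥} := (hv.linearIndepOn i).mono
    fun j hj => (hv.isIntervalChain j).mem_Icc_of_ne_zero (by simpa using hj)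
  exact this.linearIndependent.iSupIndep_span_singleton

theorem reindex (hv : IsIntervalBasis f a b v) (e : ι ≃ κ) :
    IsIntervalBasis f (a ∘ e.symm) (b ∘ e.symm) (v ∘ e.symm) where
  isIntervalChain k := hv.isIntervalChain _
  span_eq_top i := by
    rw [← hv.span_eq_top i]
    exact congrArg _ (e.symm.surjective.range_comp fun j => v j i)
  card_eq i := by
    rw [← hv.card_eq i]
    exact Finset.card_equiv e.symm (by simp)

theorem sub_linearCombination (hv : IsIntervalBasis f a b v) (E : ι → ι →₀ K)
    (hE : ∀ j, E j ∈ supported K K {j' | a j' ≤ a j ∧ b j' ≤ b j ∧ E j' = 0}) :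
    IsIntervalBasis f a b fun j i =>
      if a j ≤ i then v j i - linearCombination K (fun j' => v j' i) (E j) else 0 := by
  set d : ι → ∀ i, V i :=
    fun j i => if a j ≤ i then v j i - linearCombination K (fun j' => v j' i) (E j) else 0
  have hE' (j : ι) : E j ∈ supported K K {j' | a j' ≤ a j ∧ b j' ≤ b j} :=
    supported_mono (fun _ h => And.imp_right And.left h) (hE j)
  refine ⟨fun j => (hv.isIntervalChain j).sub_linearCombination hv.isIntervalChain (hE' j),
    fun i => ?_, hv.card_eq⟩
  rw [eq_top_iff, ← hv.span_eq_top i, span_le]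
  rintro _ ⟨j, rfl⟩
  by_cases hj : a j ≤ i
  · -- the chains subtracted from `v j` are themselves unchanged, as `E j' = 0`
    have hfix : EqOn (fun j' => v j' i) (fun j' => d j' i)
        {j' | a j' ≤ a j ∧ b j' ≤ b j ∧ E j' = 0} := fun j' hj' => by
      simp [d, hj'.1.trans hj, hj'.2.2]
    have hv_eq : v j i = d j i + linearCombination K (fun j' => d j' i) (E j) := by
      rw [← linearCombination_congr_of_mem_supported hfix (hE j)]
      simp [d, hj]
    have hmem : linearCombination K (fun j' => d j' i) (E j) ∈ span K (range fun j => d j i) := by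
      rw [← Finsupp.range_linearCombination]
      exact LinearMap.mem_range_self _ _
    change v j i ∈ _
    rw [hv_eq]
    exact add_mem (subset_span ⟨j, rfl⟩) hmem
  · simp [(hv.isIntervalChain j).eq_zero i fun h => hj h.1]

end IsIntervalBasis
end IntervalBasis

section Snoc
variable {K : Type*} [Field K] {m : ℕ} {V : Fin (m + 2) → Type*} [∀ i, AddCommGroup (V i)]
  [∀ i, Module K (V i)] {f : ∀ i : Fin (m + 1), V i.castSucc →ₗ[K] V i.succ}

theorem IsIntervalChain.snoc {a b : Fin (m + 1)} {x : ∀ i : Fin (m + 1), V i.castSucc}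
    (hx : IsIntervalChain (fun i : Fin m => f i.castSucc) a b x) :
    ∃ b' : Fin (m + 2), IsIntervalChain f a.castSucc b'
        (Fin.snoc (α := V) x (f (Fin.last m) (x (Fin.last m)))) ∧
      (∀ i : Fin (m + 1), i.castSucc ∈ Icc a.castSucc b' ↔ i ∈ Icc a b) ∧
      (Fin.last _ ∈ Icc a.castSucc b' ↔ f (Fin.last m) (x (Fin.last m)) ≠ 0) := by
  obtain ⟨b', hab', halive, hlast⟩ : ∃ b' : Fin (m + 2), a.castSucc ≤ b' ∧
      (∀ i : Fin (m + 1), i.castSucc ∈ Icc a.castSucc b' ↔ i ∈ Icc a b) ∧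
      (Fin.last _ ∈ Icc a.castSucc b' ↔ f (Fin.last m) (x (Fin.last m)) ≠ 0) := by
    by_cases hy : f (Fin.last m) (x (Fin.last m)) = 0
    · exact ⟨b.castSucc, by simpa using hx.le, by simp, by simp [hy]⟩
    · have hb : b = Fin.last m :=
        Fin.last_le_iff.1 (hx.mem_Icc_of_ne_zero fun h => hy (by simp [h])).2
      exact ⟨Fin.last _, Fin.le_last _, by simp [hb, Fin.le_last], by simp [hy, Fin.le_last]⟩
  refine ⟨b', ⟨hab', fun i hi => ?_, fun i hi => ?_⟩, halive, hlast⟩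
  · induction i using Fin.lastCases with
    | last => simpa using not_not.1 (hlast.not.1 hi)
    | cast i => simpa using hx.eq_zero i ((halive i).not.1 hi)
  · induction i using Fin.lastCases with
    | last =>
      change f _ (Fin.snoc (α := V) x _ (Fin.last m).castSucc) =
        Fin.snoc (α := V) x _ (Fin.last (m + 1))
      rw [Fin.snoc_castSucc, Fin.snoc_last]
    | cast i =>
      change f _ (Fin.snoc (α := V) x _ i.castSucc.castSucc) =
        Fin.snoc (α := V) x _ i.succ.castSucc
      rw [Fin.snoc_castSucc, Fin.snoc_castSucc]
      exact hx.map_eq i (by simpa using hi)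

theorem isIntervalChain_snoc_zero (y : V (Fin.last (m + 1))) :
    IsIntervalChain f (Fin.last _) (Fin.last _) (Fin.snoc (α := V) 0 y) where
  le := le_rfl
  eq_zero i hi := by
    induction i using Fin.lastCases with
    | last => exact absurd (by simp) hi
    | cast i => simp
  map_eq i hi := absurd hi (Fin.castSucc_lt_last i).not_ge

variable {ι : Type*} [Fintype ι]

namespace IsIntervalBasis

theorem snoc {a b : ι → Fin (m + 1)} {v : ι → ∀ i : Fin (m + 1), V i.castSucc}
    (hv : IsIntervalBasis (fun i : Fin m => f i.castSucc) a b v) {T : Finset ι}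
    (hT : ∀ j, f (Fin.last m) (v j (Fin.last m)) ≠ 0 ↔ j ∈ T) {p : ℕ}
    {w : Fin p → V (Fin.last (m + 1))}
    (hspan : span K ((fun j => f (Fin.last m) (v j (Fin.last m))) '' T ∪ range w) = ⊤)
    (hcard : #T + p = finrank K (V (Fin.last (m + 1)))) :
    ∃ (a' b' : ι ⊕ Fin p → Fin (m + 2)) (v' : ι ⊕ Fin p → ∀ i, V i),
      IsIntervalBasis f a' b' v' := by
  classical
  choose b' hchain halive hlast using fun j => (hv.isIntervalChain j).snoc
  refine ⟨Sum.elim (fun j => (a j).castSucc) fun _ => Fin.last _, Sum.elim b' fun _ => Fin.last _,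
    Sum.elim (fun j => Fin.snoc (α := V) (v j) (f (Fin.last m) (v j (Fin.last m))))
      fun k => Fin.snoc (α := V) 0 (w k),
    ⟨?_, fun i => ?_, fun i => ?_⟩⟩
  · rintro (j | k)
    exacts [hchain j, isIntervalChain_snoc_zero (w k)]
  · induction i using Fin.lastCases with
    | last =>
      rw [eq_top_iff, ← hspan, span_le]
      rintro _ (⟨j, -, rfl⟩ | ⟨k, rfl⟩)
      exacts [subset_span ⟨Sum.inl j, by simp⟩, subset_span ⟨Sum.inr k, by simp⟩]
    | cast i =>
      rw [eq_top_iff, ← hv.span_eq_top i, span_le]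
      rintro _ ⟨j, rfl⟩
      exact subset_span ⟨Sum.inl j, by simp⟩
  · induction i using Fin.lastCases with
    | last =>
      rw [← hcard, Finset.card_filter, Fintype.sum_sum_type]
      simp [hlast, hT]
    | cast i =>
      rw [← hv.card_eq i, Finset.card_filter, Finset.card_filter, Fintype.sum_sum_type]
      simp [halive]

theorem exists_snoc [FiniteDimensional K (V (Fin.last (m + 1)))] {a b : ι → Fin (m + 1)}
    {v : ι → ∀ i : Fin (m + 1), V i.castSucc}
    (hv : IsIntervalBasis (fun i : Fin m => f i.castSucc) a b v) :
    ∃ (p : ℕ) (a' b' : ι ⊕ Fin p → Fin (m + 2)) (v' : ι ⊕ Fin p → ∀ i, V i),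
      IsIntervalBasis f a' b' v' := by
  classical
  set u : ι → V (Fin.last (m + 1)) := fun j => f (Fin.last m) (v j (Fin.last m))
  obtain ⟨T, E, hT, hE_supp, hE_eq⟩ :=
    exists_linearIndepOn_sub_linearCombination_eq_ite (K := K) a u
  have hE_eq_zero (j : ι) (h : linearCombination K u (E j) = 0) : E j = 0 :=
    linearIndepOn_iff.1 hT _ (supported_mono (fun _ h => h.1) (hE_supp j)) h
  have hE (j : ι) : E j ∈ supported K K {j' | a j' ≤ a j ∧ b j' ≤ b j ∧ E j' = 0} := by
    intro j' hj'
    obtain ⟨hj'T, haj'⟩ := hE_supp j hj'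
    refine ⟨haj', ?_, hE_eq_zero j' (by simpa [hj'T] using hE_eq j')⟩
    -- `E j ≠ 0` forces `u j ≠ 0`, so the chain `j` reaches the last vertex
    suffices v j (Fin.last m) ≠ 0 from
      ((hv.isIntervalChain j).mem_Icc_of_ne_zero this).2.trans' (Fin.le_last _)
    intro hvj
    exact Finsupp.mem_support_iff.1 hj' (by simp [hE_eq_zero j (by simpa [u, hvj] using hE_eq j)])
  set u' : ι → V (Fin.last (m + 1)) := fun j => if j ∈ T then u j else 0
  have himage (j : ι) : f (Fin.last m) ((if a j ≤ Fin.last m then v j (Fin.last m) -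
      linearCombination K (fun j' => v j' (Fin.last m)) (E j) else 0)) = u' j := by
    rw [if_pos (Fin.le_last _), map_sub, apply_linearCombination]
    exact hE_eq j
  have hu'T : EqOn u u' T := fun j hj => by simp [u', Finset.mem_coe.1 hj]
  obtain ⟨p, w, hspan', hcard⟩ := (hT.congr hu'T).exists_span_union_eq_top
  refine ⟨p, (hv.sub_linearCombination E hE).snoc (w := w) (fun j => ?_) ?_ hcard⟩
  · rw [himage]
    by_cases hj : j ∈ T
    · simpa [u', hj] using hT.ne_zero hj
    · simp [u', hj]
  · simpa only [himage] using hspan'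

end IsIntervalBasis
end Snoc

section
variable {K : Type*} [Field K]

theorem isIntervalBasis_finBasis {V : Fin 1 → Type*} [∀ i, AddCommGroup (V i)]
    [∀ i, Module K (V i)] [FiniteDimensional K (V 0)]
    (f : ∀ i : Fin 0, V i.castSucc →ₗ[K] V i.succ) :
    IsIntervalBasis f (fun _ => 0) (fun _ => 0)
      (fun j => Pi.single 0 (Module.finBasis K (V 0) j)) where
  isIntervalChain _ :=
    ⟨le_rfl, fun i hi => absurd (by simp [Fin.fin_one_eq_zero i]) hi, fun i => i.elim0⟩
  span_eq_top i := by
    obtain rfl := Fin.fin_one_eq_zero i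
    simp
  card_eq i := by
    obtain rfl := Fin.fin_one_eq_zero i
    simp

theorem exists_isIntervalBasis {m : ℕ} {V : Fin (m + 1) → Type*} [∀ i, AddCommGroup (V i)]
    [∀ i, Module K (V i)] [∀ i, FiniteDimensional K (V i)]
    (f : ∀ i : Fin m, V i.castSucc →ₗ[K] V i.succ) :
    ∃ (n : ℕ) (a b : Fin n → Fin (m + 1)) (v : Fin n → ∀ i, V i),
      IsIntervalBasis f a b v := by
  induction m with
  | zero => exact ⟨_, _, _, _, isIntervalBasis_finBasis f⟩
  | succ m ih =>
    obtain ⟨n, a, b, v, hv⟩ := ih (V := fun i => V i.castSucc) (fun i => f i.castSucc)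
    obtain ⟨p, a', b', v', hv'⟩ := hv.exists_snoc
    exact ⟨n + p, _, _, _, hv'.reindex finSumFinEquiv⟩

end

/-- Gabriel's theorem for the equioriented `A_m` quiver: every finite-dimensional
representation (spaces `V i` at the vertices `i : Fin (m+1)`, linear maps
`f i : V i.castSucc → V i.succ` on the arrows) decomposes as an internal direct sum of
subrepresentations whose dimension vectors are interval vectors `(0,…,0,1,…,1,0,…,0)`,
and in each such summand the maps between adjacent nonzero vertices are isomorphisms. -/
theorem gabriel_Am_decomposition {K : Type*} [Field K] {m : ℕ}
    (V : Fin (m + 1) → Type*) [∀ i, AddCommGroup (V i)] [∀ i, Module K (V i)]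
    [∀ i, FiniteDimensional K (V i)]
    (f : ∀ i : Fin m, V i.castSucc →ₗ[K] V i.succ) :
    ∃ (n : ℕ) (W : Fin n → ∀ i : Fin (m + 1), Submodule K (V i))
      (a b : Fin n → Fin (m + 1)),
      -- at each vertex, the spaces `W j i` form an internal direct sum decomposition of `V i`
      (∀ i : Fin (m + 1), DirectSum.IsInternal (fun j : Fin n => W j i)) ∧
      -- each `W j` is a subrepresentation
      (∀ (j : Fin n) (i : Fin m), (W j i.castSucc).map (f i) ≤ W j i.succ) ∧
      -- the dimension vector of `W j` is the interval vector supported on `[a j, b j]`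
      (∀ j : Fin n, a j ≤ b j) ∧
      (∀ (j : Fin n) (i : Fin (m + 1)), a j ≤ i → i ≤ b j →
        Module.finrank K (W j i) = 1) ∧
      (∀ (j : Fin n) (i : Fin (m + 1)), ¬(a j ≤ i ∧ i ≤ b j) → W j i = ⊥) ∧
      -- between adjacent nonzero vertices, the arrow maps restrict to isomorphisms
      (∀ (j : Fin n) (i : Fin m), a j ≤ i.castSucc → i.succ ≤ b j →
        (W j i.castSucc).map (f i) = W j i.succ ∧
        ∀ x ∈ W j i.castSucc, f i x = 0 → x = 0) := by
  obtain ⟨n, a, b, v, hv⟩ := exists_isIntervalBasis f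
  have hmap (j : Fin n) (i : Fin m) (h : a j ≤ i.castSucc) :
      (K ∙ v j i.castSucc).map (f i) = K ∙ v j i.succ := by
    rw [Submodule.map_span, image_singleton, (hv.isIntervalChain j).map_eq i h]
  refine ⟨n, fun j i => K ∙ v j i, a, b, hv.isInternal, fun j i => ?_,
    fun j => (hv.isIntervalChain j).le,
    fun j i hai hib => finrank_span_singleton (hv.ne_zero ⟨hai, hib⟩),
    fun j i hi => by simp [(hv.isIntervalChain j).eq_zero i hi],
    fun j i hai hib => ⟨hmap j i hai, ?_⟩⟩
  · by_cases hai : a j ≤ i.castSucc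
    · exact (hmap j i hai).le
    · simp [(hv.isIntervalChain j).eq_zero i.castSucc fun h => hai h.1]
  · rintro _ hx hfx
    obtain ⟨c, rfl⟩ := mem_span_singleton.1 hx
    rw [map_smul, (hv.isIntervalChain j).map_eq i hai, smul_eq_zero] at hfx
    have hne := hv.ne_zero ⟨hai.trans (Fin.castSucc_le_succ i), hib⟩
    simp [hfx.resolve_right hne]
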